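/- Let q1, q2 > 0 and d1, d2, p ∈ ℝ. Let F, H : 𝒟 → ℝ be continuously differentiable on the triangle 𝒟 = {(x,y) : 0 ≤ y ≤ x ≤ 1} and satisfy q2 ∂x F(x,y) − q1 ∂y F(x,y) = d2 H(x,y) and q2 ∂x H(x,y) + q2 ∂y H(x,y) = d1 F(x,y) on 𝒟, together with F(x,x) = −d2/(q1+q2) and H(x,0) = (q1 p / q2) F(x,0) for x ∈ [0,1]. Let ℓ : [0,1] → ℝ be continuously differentiable and set L(x,y) = ℓ(x − y). Define, on 𝒟, Ψ(x,y) = F(x,y) + ∫_y^x L(x,r) F(r,y) dr and Φ(x,y) = H(x,y) − L(x,y) + ∫_y^x L(x,r) H(r,y) dr. Then on 𝒟: q2 ∂x Ψ − q1 ∂y Ψ = d2 Φ and q2 ∂x Φ + q2 ∂y Φ = d1 Ψ, and moreover Ψ(x,x) = −d2/(q1+q2) and Φ(x,0) = (q1 p / q2) Ψ(x,0) − ℓ(x) for all x ∈ [0,1]. -/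

import Mathlib

/-!
Differentiating under the integral sign gives
`∂ₓΨ = Fₓ + ℓ(0) F(x,y) + ∫_y^x ℓ'(x-r) F(r,y) dr` and
`∂ᵧΨ = F_y - ℓ(x-y) F(y,y) + ∫_y^x ℓ(x-r) F_y(r,y) dr`.
Integrating the `ℓ'` term by parts turns it into `∫_y^x ℓ(x-r) Fₓ(r,y) dr` plus boundary terms,
so for every transport operator `a ∂ₓ + b ∂ᵧ`
`(a ∂ₓ + b ∂ᵧ)(F + L F) = (1 + L)(a Fₓ + b F_y) + (a - b) ℓ(x-y) F(y,y)`,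
where `L` is the Volterra operator with kernel `ℓ(x-r)`.
For `(a, b) = (q2, -q1)` the boundary term is `(q1 + q2) ℓ(x-y) F(y,y) = -d2 ℓ(x-y)`, which is
the `-L(x,y)` put into `Φ`; for `a = b` it vanishes, and the derivatives of `-ℓ(x-y)` cancel.

The Leibniz rule `d/dt ∫_c^t g(r,t) dr = g(t,t) + ∫_c^t ∂ₜg(r,t) dr` is proved by writing
`g(r,t) = g(r,r) + ∫_r^t ∂ₜg(r,s) ds` and swapping the integrals over the triangle. It needs
globally defined data, so the kernels, known only on the triangle, are first extended by
integrating their clamped derivatives.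
-/

open Set MeasureTheory Function intervalIntegral

lemma intervalIntegral_indicator_Ioi {f : ℝ → ℝ} {a b c : ℝ} (hc : c ∈ Icc a b) :
    ∫ x in a..b, (Ioi c).indicator f x = ∫ x in c..b, f x := by
  rw [integral_of_le (hc.1.trans hc.2), integral_of_le hc.2,
    MeasureTheory.integral_indicator measurableSet_Ioi, Measure.restrict_restrict measurableSet_Ioi,
    inter_comm, Ioc_inter_Ioi, max_eq_right hc.1]

lemma intervalIntegral_indicator_Iio {f : ℝ → ℝ} {a b c : ℝ} (hc : c ∈ Icc a b) :
    ∫ x in a..b, (Iio c).indicator f x = ∫ x in a..c, f x := by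
  rw [integral_of_le (hc.1.trans hc.2), integral_of_le hc.1,
    MeasureTheory.integral_indicator measurableSet_Iio, Measure.restrict_restrict measurableSet_Iio,
    integral_Ioc_eq_integral_Ioo]
  congr 2
  ext x
  simp only [mem_inter_iff, mem_Iio, mem_Ioc, mem_Ioo]
  constructor
  · rintro ⟨h, h', -⟩; exact ⟨h', h⟩
  · rintro ⟨h, h'⟩; exact ⟨h', h, h'.le.trans hc.2⟩

lemma intervalIntegral_triangle_swap_of_le {φ : ℝ → ℝ → ℝ} (hφ : Continuous (uncurry φ))
    {a b : ℝ} (hab : a ≤ b) :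
    ∫ s in a..b, ∫ r in a..s, φ r s = ∫ r in a..b, ∫ s in r..b, φ r s := by
  let ψ : ℝ → ℝ → ℝ := fun s r => if r < s then φ r s else 0
  have hψ : IntegrableOn (uncurry ψ) (uIoc a b ×ˢ uIoc a b) := by
    have : uncurry ψ = {q : ℝ × ℝ | q.2 < q.1}.indicator (uncurry (flip φ)) := by
      ext q; simp only [indicator_apply, mem_ofPred_eq]; rfl
    rw [this]
    exact (((hφ.comp continuous_swap).continuousOn.integrableOn_compact
      (isCompact_Icc.prod isCompact_Icc)).mono_set
      (prod_mono uIoc_subset_uIcc uIoc_subset_uIcc)).indicator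
      (measurableSet_lt measurable_snd measurable_fst)
  calc ∫ s in a..b, ∫ r in a..s, φ r s
      = ∫ s in a..b, ∫ r in a..b, ψ s r := by
        refine integral_congr fun s hs => ?_
        rw [uIcc_of_le hab] at hs
        rw [← intervalIntegral_indicator_Iio hs]
        rfl
    _ = ∫ r in a..b, ∫ s in a..b, ψ s r := intervalIntegral_intervalIntegral_swap hψ
    _ = ∫ r in a..b, ∫ s in r..b, φ r s := by
        refine integral_congr fun r hr => ?_
        rw [uIcc_of_le hab] at hr
        rw [← intervalIntegral_indicator_Ioi hr]
        rfl

lemma intervalIntegral_triangle_swap {φ : ℝ → ℝ → ℝ} (hφ : Continuous (uncurry φ)) (a b : ℝ) :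
    ∫ s in a..b, ∫ r in a..s, φ r s = ∫ r in a..b, ∫ s in r..b, φ r s := by
  rcases le_total a b with hab | hba
  · exact intervalIntegral_triangle_swap_of_le hφ hab
  have hflip :=
    intervalIntegral_triangle_swap_of_le (φ := flip φ) (hφ.comp continuous_swap) hba
  calc ∫ s in a..b, ∫ r in a..s, φ r s = ∫ s in b..a, ∫ r in s..a, φ r s := by
        rw [integral_symm b a, ← intervalIntegral.integral_neg]
        exact integral_congr fun s _ => by rw [integral_symm s a, neg_neg]
    _ = ∫ r in b..a, ∫ s in b..r, φ r s := hflip.symm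
    _ = ∫ r in a..b, ∫ s in r..b, φ r s := by
        rw [integral_symm b a, ← intervalIntegral.integral_neg]
        exact integral_congr fun r _ => by rw [integral_symm b r, neg_neg]

lemma hasDerivAt_intervalIntegral_leibniz {g gy : ℝ → ℝ → ℝ} (hg : Continuous (uncurry g))
    (hgy : Continuous (uncurry gy)) (hd : ∀ r t, HasDerivAt (g r) (gy r t) t) (c x : ℝ) :
    HasDerivAt (fun t => ∫ r in c..t, g r t) (g x x + ∫ r in c..x, gy r x) x := by
  have hdiag : Continuous fun s => g s s := hg.comp (continuous_id.prodMk continuous_id)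
  have hgy_int : Continuous fun s => ∫ r in c..s, gy r s :=
    continuous_parametric_intervalIntegral_of_continuous (f := flip gy) (hgy.comp continuous_swap)
      continuous_id
  suffices h : (fun t => ∫ r in c..t, g r t) =
      fun t => ∫ s in c..t, (g s s + ∫ r in c..s, gy r s) by
    rw [h]
    exact ((hdiag.add hgy_int).integral_hasStrictDerivAt c x).hasDerivAt
  funext t
  have hrow : Continuous fun r => g r t := hg.comp (continuous_id.prodMk continuous_const)
  have hftc : ∀ r, ∫ s in r..t, gy r s = g r t - g r r := fun r =>
    integral_eq_sub_of_hasDerivAt (fun s _ => hd r s)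
      ((hgy.comp (Continuous.prodMk_right r)).intervalIntegrable r t)
  rw [integral_add (hdiag.intervalIntegrable c t) (hgy_int.intervalIntegrable c t),
    intervalIntegral_triangle_swap hgy, integral_congr fun r _ => hftc r,
    integral_sub (hrow.intervalIntegrable c t) (hdiag.intervalIntegrable c t)]
  ring

lemma HasDerivWithinAt.comp_sub_const {f : ℝ → ℝ} {f' x a : ℝ} {s t : Set ℝ}
    (hf : HasDerivWithinAt f f' t (x - a)) (hst : MapsTo (· - a) s t) :
    HasDerivWithinAt (fun x => f (x - a)) f' s x :=
  (hf.comp x ((hasDerivWithinAt_id x s).sub_const a) hst).congr_deriv (mul_one f')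

lemma HasDerivWithinAt.comp_const_sub {f : ℝ → ℝ} {f' x a : ℝ} {s t : Set ℝ}
    (hf : HasDerivWithinAt f f' t (a - x)) (hst : MapsTo (a - ·) s t) :
    HasDerivWithinAt (fun x => f (a - x)) (-f') s x :=
  (hf.comp x ((hasDerivWithinAt_id x s).const_sub a) hst).congr_deriv (mul_neg_one f')

lemma max_min_mem_Icc {a b : ℝ} (hab : a ≤ b) (s : ℝ) : max a (min b s) ∈ Icc a b :=
  ⟨le_max_left _ _, max_le hab (min_le_left _ _)⟩

lemma max_min_eq_self {a b s : ℝ} (hs : s ∈ Icc a b) : max a (min b s) = s := by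
  rw [min_eq_right hs.2, max_eq_right hs.1]

lemma continuous_max_min (a b : ℝ) : Continuous fun s : ℝ => max a (min b s) :=
  continuous_const.max (continuous_const.min continuous_id)

noncomputable def extendC1 (a b : ℝ) (f f' : ℝ → ℝ) (s : ℝ) : ℝ :=
  f a + ∫ σ in a..s, f' (max a (min b σ))

lemma hasDerivAt_extendC1 {a b : ℝ} (hab : a ≤ b) {f f' : ℝ → ℝ}
    (hf' : ContinuousOn f' (Icc a b)) (s : ℝ) :
    HasDerivAt (extendC1 a b f f') (f' (max a (min b s))) s :=
  (((hf'.comp_continuous (continuous_max_min a b) (max_min_mem_Icc hab)).integral_hasStrictDerivAt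
    a s).hasDerivAt).const_add (f a)

lemma extendC1_eqOn {a b : ℝ} {f f' : ℝ → ℝ}
    (hf : ∀ s ∈ Icc a b, HasDerivWithinAt f (f' s) (Icc a b) s)
    (hf' : ContinuousOn f' (Icc a b)) : EqOn (extendC1 a b f f') f (Icc a b) := by
  intro s hs
  have hsub : Icc a s ⊆ Icc a b := Icc_subset_Icc le_rfl hs.2
  have hclamp : ∫ σ in a..s, f' (max a (min b σ)) = ∫ σ in a..s, f' σ :=
    integral_congr fun σ hσ => by
      rw [uIcc_of_le hs.1] at hσ
      rw [max_min_eq_self (hsub hσ)]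
  have hftc : ∫ σ in a..s, f' σ = f s - f a :=
    integral_eq_sub_of_hasDerivAt_of_le hs.1
      (fun σ hσ => ((hf σ (hsub hσ)).continuousWithinAt).mono hsub)
      (fun σ hσ => (hf σ (hsub (Ioo_subset_Icc_self hσ))).hasDerivAt
        (Icc_mem_nhds hσ.1 (hσ.2.trans_le hs.2)))
      ((hf'.mono hsub).intervalIntegrable_of_Icc hs.1)
  rw [extendC1, hclamp, hftc]
  ring

def triangle : Set (ℝ × ℝ) := {q | 0 ≤ q.2 ∧ q.2 ≤ q.1 ∧ q.1 ≤ 1}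

lemma exists_extension_of_triangle {F Fy : ℝ → ℝ → ℝ} (hF : ContinuousOn (uncurry F) triangle)
    (hFy : ∀ x y, 0 ≤ y → y ≤ x → x ≤ 1 → HasDerivWithinAt (F x) (Fy x y) (Icc 0 x) y)
    (hFyc : ContinuousOn (uncurry Fy) triangle) :
    ∃ G Gy : ℝ → ℝ → ℝ, Continuous (uncurry G) ∧ Continuous (uncurry Gy) ∧
      (∀ x y, HasDerivAt (G x) (Gy x y) y) ∧
      ∀ x y, 0 ≤ y → y ≤ x → x ≤ 1 → G x y = F x y ∧ Gy x y = Fy x y := by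
  set ρ : ℝ → ℝ := fun x => max 0 (min 1 x)
  have hρ : ∀ x, ρ x ∈ Icc 0 1 := max_min_mem_Icc zero_le_one
  have hρc : Continuous ρ := continuous_max_min 0 1
  have hslice : ∀ x ≤ 1, ContinuousOn (Fy x) (Icc 0 x) := fun x hx1 =>
    hFyc.comp (Continuous.prodMk_right x).continuousOn fun y hy => ⟨hy.1, hy.2, hx1⟩
  have hGy : Continuous fun q : ℝ × ℝ => Fy (ρ q.1) (max 0 (min (ρ q.1) q.2)) :=
    hFyc.comp_continuous ((hρc.comp continuous_fst).prodMk
      (continuous_const.max ((hρc.comp continuous_fst).min continuous_snd)))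
      fun q => ⟨le_max_left _ _, max_le (hρ q.1).1 (min_le_left _ _), (hρ q.1).2⟩
  refine ⟨fun x => extendC1 0 (ρ x) (F (ρ x)) (Fy (ρ x)),
    fun x y => Fy (ρ x) (max 0 (min (ρ x) y)), ?_, hGy,
    fun x => hasDerivAt_extendC1 (hρ x).1 (hslice _ (hρ x).2), ?_⟩
  · have hF0 : Continuous fun q : ℝ × ℝ => F (ρ q.1) 0 :=
      hF.comp_continuous ((hρc.comp continuous_fst).prodMk continuous_const)
        fun q => ⟨le_rfl, (hρ q.1).1, (hρ q.1).2⟩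
    exact hF0.add (continuous_parametric_intervalIntegral_of_continuous
      (f := fun (q : ℝ × ℝ) σ => Fy (ρ q.1) (max 0 (min (ρ q.1) σ)))
      (hGy.comp ((continuous_fst.comp continuous_fst).prodMk continuous_snd)) continuous_snd)
  · intro x y h0y hyx hx1
    have hρx : ρ x = x := max_min_eq_self ⟨h0y.trans hyx, hx1⟩
    simp only [hρx]
    exact ⟨extendC1_eqOn (fun t ht => hFy x t ht.1 ht.2 hx1) (hslice x hx1) ⟨h0y, hyx⟩,
      by rw [max_min_eq_self ⟨h0y, hyx⟩]⟩

lemma ContinuousOn.comp_const_sub_Icc {ℓ : ℝ → ℝ} (hℓ : ContinuousOn ℓ (Icc 0 1)) {a x : ℝ}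
    (ha : 0 ≤ a) (hx1 : x ≤ 1) : ContinuousOn (fun r => ℓ (x - r)) (Icc a x) :=
  hℓ.comp (continuousOn_const.sub continuousOn_id) fun r hr =>
    show x - r ∈ Icc (0 : ℝ) 1 from ⟨sub_nonneg.2 hr.2, by linarith [hr.1]⟩

lemma intervalIntegrable_comp_sub_mul {ℓ u : ℝ → ℝ} (hℓ : ContinuousOn ℓ (Icc 0 1)) {a x : ℝ}
    (ha : 0 ≤ a) (hu : ContinuousOn u (Icc a 1)) (hx : x ∈ Icc a 1) :
    IntervalIntegrable (fun r => ℓ (x - r) * u r) volume a x :=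
  ((hℓ.comp_const_sub_Icc ha hx.2).mul (hu.mono (Icc_subset_Icc le_rfl hx.2))).intervalIntegrable_of_Icc
    hx.1

lemma hasDerivWithinAt_integral_comp_sub_mul {ℓ ℓ' f : ℝ → ℝ}
    (hℓ : ∀ s ∈ Icc (0 : ℝ) 1, HasDerivWithinAt ℓ (ℓ' s) (Icc 0 1) s)
    (hℓ' : ContinuousOn ℓ' (Icc 0 1)) {a x : ℝ} (ha : 0 ≤ a) (hf : ContinuousOn f (Icc a 1))
    (hx : x ∈ Icc a 1) :
    HasDerivWithinAt (fun t => ∫ r in a..t, ℓ (t - r) * f r)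
      (ℓ 0 * f x + ∫ r in a..x, ℓ' (x - r) * f r) (Icc a 1) x := by
  set ℓe := extendC1 0 1 ℓ ℓ'
  set ℓe' : ℝ → ℝ := fun s => ℓ' (max 0 (min 1 s))
  set fe : ℝ → ℝ := fun r => f (max a (min 1 r))
  have hℓe_d : ∀ s, HasDerivAt ℓe (ℓe' s) s := hasDerivAt_extendC1 zero_le_one hℓ'
  have hℓe_c : Continuous ℓe := continuous_iff_continuousAt.2 fun s => (hℓe_d s).continuousAt
  have hℓe'_c : Continuous ℓe' :=
    hℓ'.comp_continuous (continuous_max_min 0 1) (max_min_mem_Icc zero_le_one)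
  have hfe : Continuous fe :=
    hf.comp_continuous (continuous_max_min a 1) (max_min_mem_Icc (hx.1.trans hx.2))
  have hagree : ∀ t ∈ Icc a 1, ∀ r ∈ uIcc a t,
      ℓ (t - r) * f r = ℓe (t - r) * fe r ∧ ℓ' (t - r) * f r = ℓe' (t - r) * fe r := by
    intro t ht r hr
    rw [uIcc_of_le ht.1] at hr
    have hs : t - r ∈ Icc (0 : ℝ) 1 := ⟨sub_nonneg.2 hr.2, by linarith [hr.1, ht.2]⟩
    simp only [ℓe, ℓe', fe, max_min_eq_self hs, max_min_eq_self ⟨hr.1, hr.2.trans ht.2⟩,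
      extendC1_eqOn hℓ hℓ' hs, and_self]
  have key := hasDerivAt_intervalIntegral_leibniz (g := fun r t => ℓe (t - r) * fe r)
    (gy := fun r t => ℓe' (t - r) * fe r)
    ((hℓe_c.comp (continuous_snd.sub continuous_fst)).mul (hfe.comp continuous_fst))
    ((hℓe'_c.comp (continuous_snd.sub continuous_fst)).mul (hfe.comp continuous_fst))
    (fun r t => ((hℓe_d (t - r)).comp_sub_const t r).mul_const (fe r))
    a x
  refine (key.hasDerivWithinAt.congr_of_mem
    (fun t ht => integral_congr fun r hr => (hagree t ht r hr).1) hx).congr_deriv ?_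
  rw [sub_self, integral_congr fun r hr => (hagree x hx r hr).2]
  simp only [ℓe', fe]
  rw [max_min_eq_self hx, ← extendC1_eqOn hℓ hℓ' ⟨le_rfl, zero_le_one⟩]

lemma hasDerivWithinAt_integral_lower_comp_sub_mul {ℓ : ℝ → ℝ} (hℓ : ContinuousOn ℓ (Icc 0 1))
    {F Fy : ℝ → ℝ → ℝ} (hF : ContinuousOn (uncurry F) triangle)
    (hFy : ∀ x y, 0 ≤ y → y ≤ x → x ≤ 1 → HasDerivWithinAt (F x) (Fy x y) (Icc 0 x) y)
    (hFyc : ContinuousOn (uncurry Fy) triangle) {x y : ℝ} (h0y : 0 ≤ y) (hyx : y ≤ x)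
    (hx1 : x ≤ 1) :
    HasDerivWithinAt (fun t => ∫ r in t..x, ℓ (x - r) * F r t)
      (-(ℓ (x - y) * F y y) + ∫ r in y..x, ℓ (x - r) * Fy r y) (Icc 0 x) y := by
  obtain ⟨G, Gy, hG, hGy, hGd, hGF⟩ := exists_extension_of_triangle hF hFy hFyc
  set ℓe : ℝ → ℝ := fun s => ℓ (max 0 (min 1 s))
  have hℓe : Continuous ℓe := hℓ.comp_continuous (continuous_max_min 0 1)
    (max_min_mem_Icc zero_le_one)
  have hagree : ∀ t ∈ Icc 0 x, ∀ r ∈ uIcc x t,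
      ℓ (x - r) * F r t = ℓe (x - r) * G r t ∧ ℓ (x - r) * Fy r t = ℓe (x - r) * Gy r t := by
    intro t ht r hr
    rw [uIcc_of_ge ht.2] at hr
    have hs : x - r ∈ Icc (0 : ℝ) 1 := ⟨sub_nonneg.2 hr.2, by linarith [hr.1, ht.1]⟩
    obtain ⟨hG_eq, hGy_eq⟩ := hGF r t ht.1 hr.1 (hr.2.trans hx1)
    simp only [ℓe, max_min_eq_self hs, hG_eq, hGy_eq, and_self]
  have hℓx : Continuous fun q : ℝ × ℝ => ℓe (x - q.1) :=
    hℓe.comp (continuous_const.sub continuous_fst)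
  have key := hasDerivAt_intervalIntegral_leibniz (g := fun r t => ℓe (x - r) * G r t)
    (gy := fun r t => ℓe (x - r) * Gy r t) (hℓx.mul hG) (hℓx.mul hGy)
    (fun r t => (hGd r t).const_mul _) x y
  refine ((key.neg.hasDerivWithinAt (s := Icc 0 x)).congr_of_mem (fun t ht => ?_)
    ⟨h0y, hyx⟩).congr_deriv ?_
  · rw [integral_symm x t, Pi.neg_apply, integral_congr fun r hr => (hagree t ht r hr).1]
  · rw [integral_symm x y, (hagree y ⟨h0y, hyx⟩ y right_mem_uIcc).1,
      integral_congr fun r hr => (hagree y ⟨h0y, hyx⟩ r hr).2]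
    ring

lemma integral_deriv_comp_sub_mul {ℓ ℓ' f f' : ℝ → ℝ}
    (hℓ : ∀ s ∈ Icc (0 : ℝ) 1, HasDerivWithinAt ℓ (ℓ' s) (Icc 0 1) s)
    (hℓ' : ContinuousOn ℓ' (Icc 0 1)) {a x : ℝ} (ha : 0 ≤ a)
    (hf : ∀ r ∈ Icc a 1, HasDerivWithinAt f (f' r) (Icc a 1) r) (hf' : ContinuousOn f' (Icc a 1))
    (hx : x ∈ Icc a 1) :
    ∫ r in a..x, ℓ' (x - r) * f r =
      ℓ (x - a) * f a - ℓ 0 * f x + ∫ r in a..x, ℓ (x - r) * f' r := by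
  have hsub : Icc a x ⊆ Icc a 1 := Icc_subset_Icc le_rfl hx.2
  have hmaps : MapsTo (x - ·) (Icc a x) (Icc 0 1) := fun r hr =>
    ⟨sub_nonneg.2 hr.2, by linarith [hr.1, hx.2]⟩
  have hu : ∀ r ∈ Icc a x,
      HasDerivWithinAt (fun r => ℓ (x - r)) (-ℓ' (x - r)) (Icc a x) r := fun r hr =>
    (hℓ (x - r) (hmaps hr)).comp_const_sub hmaps
  have hv : ∀ r ∈ Icc a x, HasDerivWithinAt f (f' r) (Icc a x) r := fun r hr =>
    (hf r (hsub hr)).mono hsub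
  rw [← uIcc_of_le hx.1] at hu hv
  have hibp := integral_mul_deriv_eq_deriv_mul_of_hasDerivWithinAt hu hv
    ((hℓ'.comp_const_sub_Icc ha hx.2).neg.intervalIntegrable_of_Icc hx.1)
    ((hf'.mono hsub).intervalIntegrable_of_Icc hx.1)
  simp only [neg_mul, intervalIntegral.integral_neg, sub_self] at hibp
  linear_combination -hibp

lemma ContinuousOn.slice_triangle {F : ℝ → ℝ → ℝ} (hF : ContinuousOn (uncurry F) triangle) {y : ℝ}
    (h0y : 0 ≤ y) : ContinuousOn (F · y) (Icc y 1) :=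
  hF.comp (continuous_id.prodMk continuous_const).continuousOn fun _ hr => ⟨h0y, hr.1, hr.2⟩

noncomputable def volterraTransform (ℓ : ℝ → ℝ) (F : ℝ → ℝ → ℝ) (x y : ℝ) : ℝ :=
  F x y + ∫ r in y..x, ℓ (x - r) * F r y

lemma volterraTransform_transport {ℓ ℓ' : ℝ → ℝ}
    (hℓ : ∀ s ∈ Icc (0 : ℝ) 1, HasDerivWithinAt ℓ (ℓ' s) (Icc 0 1) s)
    (hℓ' : ContinuousOn ℓ' (Icc 0 1)) {F Fx Fy w : ℝ → ℝ → ℝ}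
    (hF : ContinuousOn (uncurry F) triangle)
    (hFx : ∀ x y, 0 ≤ y → y ≤ x → x ≤ 1 → HasDerivWithinAt (F · y) (Fx x y) (Icc y 1) x)
    (hFy : ∀ x y, 0 ≤ y → y ≤ x → x ≤ 1 → HasDerivWithinAt (F x) (Fy x y) (Icc 0 x) y)
    (hFxc : ContinuousOn (uncurry Fx) triangle) (hFyc : ContinuousOn (uncurry Fy) triangle)
    {a b c : ℝ} (hpde : ∀ x y, 0 ≤ y → y ≤ x → x ≤ 1 → a * Fx x y + b * Fy x y = c * w x y)
    {x y : ℝ} (h0y : 0 ≤ y) (hyx : y ≤ x) (hx1 : x ≤ 1) :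
    ∃ Vx Vy : ℝ, HasDerivWithinAt (volterraTransform ℓ F · y) Vx (Icc y 1) x ∧
      HasDerivWithinAt (volterraTransform ℓ F x) Vy (Icc 0 x) y ∧
      a * Vx + b * Vy = c * volterraTransform ℓ w x y + (a - b) * ℓ (x - y) * F y y := by
  have hℓc : ContinuousOn ℓ (Icc 0 1) := fun s hs => (hℓ s hs).continuousWithinAt
  have hx : x ∈ Icc y 1 := ⟨hyx, hx1⟩
  have hlin : a * (∫ r in y..x, ℓ (x - r) * Fx r y) + b * ∫ r in y..x, ℓ (x - r) * Fy r y
      = c * ∫ r in y..x, ℓ (x - r) * w r y := by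
    rw [← intervalIntegral.integral_const_mul, ← intervalIntegral.integral_const_mul,
      ← intervalIntegral.integral_const_mul,
      ← integral_add
        ((intervalIntegrable_comp_sub_mul hℓc h0y (hFxc.slice_triangle h0y) hx).const_mul a)
        ((intervalIntegrable_comp_sub_mul hℓc h0y (hFyc.slice_triangle h0y) hx).const_mul b)]
    refine integral_congr fun r hr => ?_
    rw [uIcc_of_le hyx] at hr
    linear_combination ℓ (x - r) * hpde r y h0y hr.1 (hr.2.trans hx1)
  have hibp := integral_deriv_comp_sub_mul hℓ hℓ' h0y (fun r hr => hFx r y h0y hr.1 hr.2)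
    (hFxc.slice_triangle h0y) hx
  refine ⟨_, _, (hFx x y h0y hyx hx1).add
      (hasDerivWithinAt_integral_comp_sub_mul hℓ hℓ' h0y (hF.slice_triangle h0y) hx),
    (hFy x y h0y hyx hx1).add
      (hasDerivWithinAt_integral_lower_comp_sub_mul hℓc hF hFy hFyc h0y hyx hx1), ?_⟩
  rw [volterraTransform, hibp]
  linear_combination hlin + hpde x y h0y hyx hx1

lemma volterraTransform_eq_const_mul {ℓ : ℝ → ℝ} {F H : ℝ → ℝ → ℝ} {c x y : ℝ} (hyx : y ≤ x)
    (h : ∀ r ∈ Icc y x, H r y = c * F r y) :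
    volterraTransform ℓ H x y = c * volterraTransform ℓ F x y := by
  have hint : ∫ r in y..x, ℓ (x - r) * H r y = c * ∫ r in y..x, ℓ (x - r) * F r y := by
    rw [← intervalIntegral.integral_const_mul]
    refine integral_congr fun r hr => ?_
    rw [uIcc_of_le hyx] at hr
    rw [h r hr, mul_left_comm]
  rw [volterraTransform, volterraTransform, hint, h x ⟨hyx, le_rfl⟩, mul_add]

/-- Appendix B of the paper.  The Volterra kernel
transformation with difference kernel `L(x,y) = ℓ(x-y)` converts a solution
pair `(F, H)` of the simplified kernel equations into a solution pair
`(Ψ, Φ)` of the control kernel equations, whose boundary condition at `y = 0`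
acquires the additional term `-ℓ(x)`. -/
theorem kernel_transformation
    (q1 q2 : ℝ) (hq1 : 0 < q1) (hq2 : 0 < q2) (d1 d2 p : ℝ)
    (F H Fx Fy Hx Hy : ℝ → ℝ → ℝ)
    -- F, H continuously differentiable on the triangle 𝒟:
    (hFc : ContinuousOn (fun q : ℝ × ℝ => F q.1 q.2)
      {q : ℝ × ℝ | 0 ≤ q.2 ∧ q.2 ≤ q.1 ∧ q.1 ≤ 1})
    (hHc : ContinuousOn (fun q : ℝ × ℝ => H q.1 q.2)
      {q : ℝ × ℝ | 0 ≤ q.2 ∧ q.2 ≤ q.1 ∧ q.1 ≤ 1})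
    (hFx : ∀ x y, 0 ≤ y → y ≤ x → x ≤ 1 →
      HasDerivWithinAt (fun x' => F x' y) (Fx x y) (Icc y 1) x)
    (hFy : ∀ x y, 0 ≤ y → y ≤ x → x ≤ 1 →
      HasDerivWithinAt (fun y' => F x y') (Fy x y) (Icc 0 x) y)
    (hHx : ∀ x y, 0 ≤ y → y ≤ x → x ≤ 1 →
      HasDerivWithinAt (fun x' => H x' y) (Hx x y) (Icc y 1) x)
    (hHy : ∀ x y, 0 ≤ y → y ≤ x → x ≤ 1 →
      HasDerivWithinAt (fun y' => H x y') (Hy x y) (Icc 0 x) y)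
    (hFxc : ContinuousOn (fun q : ℝ × ℝ => Fx q.1 q.2)
      {q : ℝ × ℝ | 0 ≤ q.2 ∧ q.2 ≤ q.1 ∧ q.1 ≤ 1})
    (hFyc : ContinuousOn (fun q : ℝ × ℝ => Fy q.1 q.2)
      {q : ℝ × ℝ | 0 ≤ q.2 ∧ q.2 ≤ q.1 ∧ q.1 ≤ 1})
    (hHxc : ContinuousOn (fun q : ℝ × ℝ => Hx q.1 q.2)
      {q : ℝ × ℝ | 0 ≤ q.2 ∧ q.2 ≤ q.1 ∧ q.1 ≤ 1})
    (hHyc : ContinuousOn (fun q : ℝ × ℝ => Hy q.1 q.2)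
      {q : ℝ × ℝ | 0 ≤ q.2 ∧ q.2 ≤ q.1 ∧ q.1 ≤ 1})
    -- the simplified kernel equations (B.4)–(B.6) on 𝒟:
    (hFpde : ∀ x y, 0 ≤ y → y ≤ x → x ≤ 1 →
      q2 * Fx x y - q1 * Fy x y = d2 * H x y)
    (hHpde : ∀ x y, 0 ≤ y → y ≤ x → x ≤ 1 →
      q2 * Hx x y + q2 * Hy x y = d1 * F x y)
    (hFbc : ∀ x ∈ Icc (0:ℝ) 1, F x x = -d2 / (q1 + q2))
    (hHbc : ∀ x ∈ Icc (0:ℝ) 1, H x 0 = (q1 * p / q2) * F x 0)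
    -- ℓ continuously differentiable on [0,1], L(x,y) = ℓ(x-y):
    (ℓ ℓ' : ℝ → ℝ)
    (hℓ : ∀ s ∈ Icc (0:ℝ) 1, HasDerivWithinAt ℓ (ℓ' s) (Icc 0 1) s)
    (hℓ'c : ContinuousOn ℓ' (Icc 0 1))
    -- the transformed kernels:
    (Ψ Φ : ℝ → ℝ → ℝ)
    (hΨ : ∀ x y, Ψ x y = F x y + ∫ r in y..x, ℓ (x - r) * F r y)
    (hΦ : ∀ x y, Φ x y = H x y - ℓ (x - y) + ∫ r in y..x, ℓ (x - r) * H r y) :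
    (∀ x y, 0 ≤ y → y ≤ x → x ≤ 1 →
      ∃ Ψx Ψy Φx Φy : ℝ,
        HasDerivWithinAt (fun x' => Ψ x' y) Ψx (Icc y 1) x ∧
        HasDerivWithinAt (fun y' => Ψ x y') Ψy (Icc 0 x) y ∧
        HasDerivWithinAt (fun x' => Φ x' y) Φx (Icc y 1) x ∧
        HasDerivWithinAt (fun y' => Φ x y') Φy (Icc 0 x) y ∧
        q2 * Ψx - q1 * Ψy = d2 * Φ x y ∧
        q2 * Φx + q2 * Φy = d1 * Ψ x y) ∧
    (∀ x ∈ Icc (0:ℝ) 1, Ψ x x = -d2 / (q1 + q2)) ∧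
    (∀ x ∈ Icc (0:ℝ) 1, Φ x 0 = (q1 * p / q2) * Ψ x 0 - ℓ x) := by
  obtain rfl : Ψ = volterraTransform ℓ F := funext fun x => funext (hΨ x)
  obtain rfl : Φ = fun x y => volterraTransform ℓ H x y - ℓ (x - y) := by
    ext x y
    rw [hΦ, volterraTransform]
    ring
  refine ⟨fun x y h0y hyx hx1 => ?_, fun x hx => by simp [volterraTransform, hFbc x hx],
    fun x hx => ?_⟩
  · obtain ⟨Ψx, Ψy, hΨx, hΨy, hΨ_pde⟩ := volterraTransform_transport (a := q2) (b := -q1)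
      (c := d2) (w := H) hℓ hℓ'c hFc hFx hFy hFxc hFyc
      (fun x y h0y hyx hx1 => by linear_combination hFpde x y h0y hyx hx1) h0y hyx hx1
    obtain ⟨Vx, Vy, hVx, hVy, hV_pde⟩ := volterraTransform_transport (a := q2) (b := q2)
      hℓ hℓ'c hHc hHx hHy hHxc hHyc hHpde h0y hyx hx1
    have hxy : x - y ∈ Icc (0 : ℝ) 1 := ⟨sub_nonneg.2 hyx, by linarith⟩
    have hℓx := (hℓ _ hxy).comp_sub_const (s := Icc y 1) fun t ht =>
      show t - y ∈ Icc (0 : ℝ) 1 from ⟨sub_nonneg.2 ht.1, by linarith [ht.2]⟩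
    have hℓy := (hℓ _ hxy).comp_const_sub (s := Icc 0 x) fun t ht =>
      show x - t ∈ Icc (0 : ℝ) 1 from ⟨sub_nonneg.2 ht.2, by linarith [ht.1]⟩
    have hFyy : (q1 + q2) * F y y = -d2 := by
      rw [hFbc y ⟨h0y, hyx.trans hx1⟩]
      field_simp [(add_pos hq1 hq2).ne']
    refine ⟨Ψx, Ψy, _, _, hΨx, hΨy, hVx.sub hℓx, hVy.sub hℓy, ?_, ?_⟩
    · linear_combination hΨ_pde + ℓ (x - y) * hFyy
    · linear_combination hV_pde
  · beta_reduce
    rw [volterraTransform_eq_const_mul hx.1 fun r hr => hHbc r ⟨hr.1, hr.2.trans hx.2⟩, sub_zero]
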